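/- Let p = 2q be an even integer with q ≥ 1. For t > 0 define the cumulant sequence κ^{(t)} by κ^{(t)}_1 = 0 and κ^{(t)}_s = t^{1−s/2} for s ≥ 2, and let (m^{(t)}_n)_{n≥0} be defined by m^{(t)}_0 = 1 and, for n ≥ 1, m^{(t)}_n = Σ_{s=1}^{n} κ^{(t)}_s · Σ_{(i_1,…,i_{sq}) ∈ ℕ^{sq}, i_1+…+i_{sq} = n−s} Π_{j=1}^{sq} m^{(t)}_{i_j}. Then for every n ≥ 0, as t → ∞, m^{(t)}_n converges to F_p(n/2) if n is even and to 0 if n is odd, where F_p(k) = (1/(pk+1))·(pk+1 choose k) is the Fuss–Catalan number. -/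

import Mathlib

open Filter

/-- The Fuss–Catalan number `F_p(k) = (1/(pk+1)) * (pk+1 choose k)`, as a real number. -/
noncomputable def fussCatalan (p k : ℕ) : ℝ :=
  (1 / (p * k + 1 : ℝ)) * (Nat.choose (p * k + 1) k : ℝ)

/-- The free cumulants `κ^{(t)}` of the reshaped free Poisson law `(ν_{p,t} − Δ_t)/√t`:
`κ^{(t)}_1 = 0` and `κ^{(t)}_s = t^(1 − s/2)` for `s ≥ 2`. -/
noncomputable def reshapedCumulant (t : ℝ) (s : ℕ) : ℝ :=
  if s = 1 then 0 else t ^ ((1 : ℝ) - (s : ℝ) / 2)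

namespace Stmt12Aux

/-- Raney numbers `R_p(k, r) = (r/(pk+r)) C(pk+r, k)`, with `R_p(0, r) = 1`. -/
noncomputable def raney (p k r : ℕ) : ℝ :=
  if k = 0 then 1 else (r : ℝ) / (p * k + r) * (Nat.choose (p * k + r) k : ℝ)

lemma raney_zero (p r : ℕ) : raney p 0 r = 1 := if_pos rfl

lemma raney_formula (p k r : ℕ) (h : 1 ≤ p * k + r) :
    raney p k r = (r : ℝ) / (p * k + r) * (Nat.choose (p * k + r) k : ℝ) := by
  rcases Nat.eq_zero_or_pos k with rfl | hk
  · have hr : (1 : ℕ) ≤ r := by simpa using h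
    have hr' : (r : ℝ) ≠ 0 := by exact_mod_cast Nat.one_le_iff_ne_zero.mp hr
    rw [raney, if_pos rfl]
    simp [div_eq_one_iff_eq, hr']
  · rw [raney, if_neg (Nat.pos_iff_ne_zero.mp hk)]

lemma raney_formula' (p k r : ℕ) (h : 1 ≤ p * k + r) :
    raney p k r = (r : ℝ) / ((p * k + r : ℕ) : ℝ) * (Nat.choose (p * k + r) k : ℝ) := by
  rw [raney_formula p k r h]
  push_cast
  ring

lemma raney_right_zero (p k : ℕ) (hk : 1 ≤ k) : raney p k 0 = 0 := by
  rw [raney, if_neg (Nat.pos_iff_ne_zero.mp hk)]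
  simp

/-- The degenerate algebraic identity behind the Pascal recurrence. -/
lemma raney_alg (a b k p r N : ℝ) (h1 : a * (k + 1) = b * (N - k)) (hN : N = p * k + p + r)
    (hk : k + 1 ≠ 0) (hN0 : N ≠ 0) (hN1 : N + 1 ≠ 0) :
    (r + 1) / (N + 1) * (b + a) = r / N * a + (r + p) / N * b := by
  have ha : a = b * (N - k) / (k + 1) := by
    field_simp
    linarith [h1]
  subst ha hN
  field_simp
  rw [div_eq_div_iff (by intro h; apply hN1; linarith) (by intro h; apply hN0; linarith)]
  ring

/-- Pascal-type recurrence for Raney numbers. -/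
lemma raney_pascal (p k r : ℕ) (hp : 1 ≤ p) :
    raney p (k + 1) (r + 1) = raney p (k + 1) r + raney p k (r + p) := by
  set N1 : ℕ := p * (k + 1) + r with hN1
  have h1 : p * (k + 1) + (r + 1) = N1 + 1 := by omega
  have h2 : p * k + (r + p) = N1 := by rw [hN1]; ring
  have hkN : k + 1 ≤ N1 := by
    have : k + 1 ≤ p * (k + 1) := Nat.le_mul_of_pos_left _ hp
    omega
  have hN1pos : 1 ≤ N1 := by omega
  rw [raney_formula' p (k + 1) (r + 1) (by omega), raney_formula' p (k + 1) r (by omega),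
    raney_formula' p k (r + p) (by omega), h1, h2,
    show p * (k + 1) + r = N1 from hN1.symm]
  -- choose relations
  have hpas : Nat.choose (N1 + 1) (k + 1) = Nat.choose N1 k + Nat.choose N1 (k + 1) :=
    Nat.choose_succ_succ N1 k
  have hrel : Nat.choose N1 (k + 1) * (k + 1) = Nat.choose N1 k * (N1 - k) :=
    Nat.choose_succ_right_eq N1 k
  set a : ℝ := (Nat.choose N1 (k + 1) : ℝ) with hadef
  set b : ℝ := (Nat.choose N1 k : ℝ) with hbdef
  have hrelR : a * ((k : ℝ) + 1) = b * ((N1 : ℝ) - k) := by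
    have hknat : k ≤ N1 := by omega
    rw [hadef, hbdef]
    have := congrArg (fun x : ℕ => (x : ℝ)) hrel
    push_cast [Nat.cast_sub hknat] at this
    push_cast
    linarith [this]
  have hcast : ((Nat.choose (N1 + 1) (k + 1) : ℕ) : ℝ) = b + a := by
    rw [hpas]; push_cast [hadef, hbdef]; ring
  have hNR : (N1 : ℝ) = (p : ℝ) * k + p + r := by
    rw [hN1]; push_cast; ring
  have hN0 : (N1 : ℝ) ≠ 0 := by positivity
  have key := raney_alg a b (k : ℝ) (p : ℝ) (r : ℝ) (N1 : ℝ) hrelR hNR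
    (by positivity) hN0 (by positivity)
  rw [hcast]
  push_cast
  linarith [key]

/-- Convolution identity for Raney numbers. -/
lemma raney_conv (p : ℕ) (hp : 1 ≤ p) :
    ∀ k s r : ℕ,
      (∑ ij ∈ Finset.HasAntidiagonal.antidiagonal k, raney p ij.1 r * raney p ij.2 s) = raney p k (r + s) := by
  intro k
  induction k using Nat.strong_induction_on with
  | _ k ih =>
    intro s
    induction s with
    | zero =>
      intro r
      rw [Finset.sum_eq_single (k, 0)]
      · simp [raney_zero]
      · intro b hb hbne
        have hb' := Finset.HasAntidiagonal.mem_antidiagonal.mp hb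
        have : 1 ≤ b.2 := by
          rcases Nat.eq_zero_or_pos b.2 with h0 | h1
          · exfalso; apply hbne
            have : b.1 = k := by omega
            exact Prod.ext this h0
          · exact h1
        rw [raney_right_zero p b.2 this, mul_zero]
      · intro h
        exact absurd (Finset.HasAntidiagonal.mem_antidiagonal.mpr (by simp)) h
    | succ s ihs =>
      intro r
      rcases k with _ | k
      · simp [raney_zero]
      · rw [Finset.Nat.sum_antidiagonal_succ']
        have hsplit : ∀ ij : ℕ × ℕ,
            raney p ij.1 r * raney p (ij.2 + 1) (s + 1)
              = raney p ij.1 r * raney p (ij.2 + 1) s + raney p ij.1 r * raney p ij.2 (s + p) := by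
          intro ij
          rw [raney_pascal p ij.2 s hp]
          ring
        simp only [hsplit]
        rw [Finset.sum_add_distrib]
        have hsecond : (∑ ij ∈ Finset.HasAntidiagonal.antidiagonal k, raney p ij.1 r * raney p ij.2 (s + p))
            = raney p k (r + (s + p)) := ih k (Nat.lt_succ_self k) (s + p) r
        have hfirst : raney p (k + 1) r * raney p 0 (s + 1)
              + (∑ ij ∈ Finset.HasAntidiagonal.antidiagonal k, raney p ij.1 r * raney p (ij.2 + 1) s)
            = raney p (k + 1) (r + s) := by
          rw [raney_zero]
          have := ihs r
          rw [Finset.Nat.sum_antidiagonal_succ'] at this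
          rw [raney_zero] at this
          linarith [this]
        have hpas := raney_pascal p k (r + s) hp
        have e1 : r + (s + 1) = (r + s) + 1 := by ring
        have e2 : r + (s + p) = (r + s) + p := by ring
        rw [e1, hpas, ← hfirst, hsecond, e2]
        ring

/-- Splitting a sum over `antidiagonalTuple (c+1) n` of products. -/
lemma sum_antidiagonalTuple_succ (c n : ℕ) (f : ℕ → ℝ) :
    (∑ i ∈ Finset.Nat.antidiagonalTuple (c + 1) n, ∏ j, f (i j))
      = ∑ ij ∈ Finset.HasAntidiagonal.antidiagonal n,
          f ij.1 * ∑ x ∈ Finset.Nat.antidiagonalTuple c ij.2, ∏ j, f (x j) := by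
  simp_rw [Finset.mul_sum]
  rw [Finset.sum_sigma']
  refine (Finset.sum_bij' (fun x _ => (⟨(x 0, ∑ j, Fin.tail x j), Fin.tail x⟩ :
      Σ _ : ℕ × ℕ, (Fin c → ℕ))) (fun z _ => Fin.cons z.1.1 z.2) ?_ ?_ ?_ ?_ ?_)
  · intro x hx
    have hx' := Finset.Nat.mem_antidiagonalTuple.mp hx
    refine Finset.mem_sigma.mpr ⟨Finset.HasAntidiagonal.mem_antidiagonal.mpr ?_, Finset.Nat.mem_antidiagonalTuple.mpr rfl⟩
    dsimp only
    rw [← hx', Fin.sum_univ_succ]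
    rfl
  · intro z hz
    have hz' := Finset.mem_sigma.mp hz
    have h1 := Finset.HasAntidiagonal.mem_antidiagonal.mp hz'.1
    have h2 := Finset.Nat.mem_antidiagonalTuple.mp hz'.2
    refine Finset.Nat.mem_antidiagonalTuple.mpr ?_
    rw [Fin.sum_cons, h2, h1]
  · intro x hx
    simp [Fin.cons_self_tail]
  · intro z hz
    have hz' := Finset.mem_sigma.mp hz
    have h2 := Finset.Nat.mem_antidiagonalTuple.mp hz'.2
    refine Sigma.ext ?_ ?_
    · simp [Fin.tail_cons, h2]
    · simp [Fin.tail_cons]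
  · intro x hx
    rw [Fin.prod_univ_succ]
    rfl

/-- `p`-fold convolution: sums over tuples of Raney numbers. -/
lemma tuple_raney (p : ℕ) (hp : 1 ≤ p) :
    ∀ c k : ℕ,
      (∑ i ∈ Finset.Nat.antidiagonalTuple c k, ∏ j, raney p (i j) 1) = raney p k c := by
  intro c
  induction c with
  | zero =>
    intro k
    rcases k with _ | k
    · simp [raney_zero]
    · simp [raney_right_zero p (k + 1) (by omega)]
  | succ c ihc =>
    intro k
    rw [sum_antidiagonalTuple_succ c k (fun n => raney p n 1)]
    simp_rw [ihc]
    have := raney_conv p hp k c 1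
    rw [this]
    norm_num [Nat.add_comm]

/-- The limit moments. -/
noncomputable def Lf (q n : ℕ) : ℝ := if Even n then fussCatalan (2 * q) (n / 2) else 0

lemma fussCatalan_eq_raney (p k : ℕ) : fussCatalan p k = raney p k 1 := by
  rw [raney_formula p k 1 (by omega), fussCatalan]
  norm_num

lemma Lf_zero (q : ℕ) : Lf q 0 = 1 := by
  simp [Lf, fussCatalan_eq_raney, raney_zero]

lemma Lf_one (q : ℕ) : Lf q 1 = 0 := by
  simp [Lf]

lemma Lf_odd (q n : ℕ) (h : ¬ Even n) : Lf q n = 0 := if_neg h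

/-- Sums of products of `Lf` over tuples summing to an odd number vanish. -/
lemma sum_tuple_Lf_odd (q c M : ℕ) (hM : ¬ Even M) :
    (∑ i ∈ Finset.Nat.antidiagonalTuple c M, ∏ j, Lf q (i j)) = 0 := by
  refine Finset.sum_eq_zero fun i hi => ?_
  have hi' := Finset.Nat.mem_antidiagonalTuple.mp hi
  have : ¬ ∀ j, Even (i j) := by
    intro hall
    exact hM (hi' ▸ Finset.even_sum _ fun j _ => hall j)
  push_neg at this
  obtain ⟨j, hj⟩ := this
  exact Finset.prod_eq_zero (Finset.mem_univ j) (Lf_odd q (i j) hj)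

/-- Sums of products of `Lf` over tuples summing to an even number. -/
lemma sum_tuple_Lf_even (q c k : ℕ) (hq : 1 ≤ q) :
    (∑ i ∈ Finset.Nat.antidiagonalTuple c (2 * k), ∏ j, Lf q (i j))
      = raney (2 * q) k c := by
  rw [← tuple_raney (2 * q) (by omega) c k]
  have hsub : (Finset.Nat.antidiagonalTuple c (2 * k)).filter (fun i => ∀ j, Even (i j))
      ⊆ Finset.Nat.antidiagonalTuple c (2 * k) := Finset.filter_subset _ _
  rw [← Finset.sum_subset hsub ?hz]
  case hz =>
    intro i hi hni
    rw [Finset.mem_filter, not_and] at hni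
    have := hni hi
    push_neg at this
    obtain ⟨j, hj⟩ := this
    exact Finset.prod_eq_zero (Finset.mem_univ j) (Lf_odd q (i j) hj)
  refine Finset.sum_bij' (fun i _ => fun j => i j / 2) (fun x _ => fun j => 2 * x j) ?_ ?_ ?_ ?_ ?_
  · intro i hi
    rw [Finset.mem_filter] at hi
    obtain ⟨hi1, hi2⟩ := hi
    have hsum := Finset.Nat.mem_antidiagonalTuple.mp hi1
    refine Finset.Nat.mem_antidiagonalTuple.mpr ?_
    have : 2 * (∑ j, i j / 2) = 2 * k := by
      rw [Finset.mul_sum]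
      rw [← hsum]
      exact Finset.sum_congr rfl fun j _ => Nat.two_mul_div_two_of_even (hi2 j)
    exact Nat.eq_of_mul_eq_mul_left (by norm_num) this
  · intro x hx
    have hsum := Finset.Nat.mem_antidiagonalTuple.mp hx
    rw [Finset.mem_filter]
    constructor
    · refine Finset.Nat.mem_antidiagonalTuple.mpr ?_
      rw [← Finset.mul_sum, hsum]
    · intro j; exact even_two_mul (x j)
  · intro i hi
    rw [Finset.mem_filter] at hi
    funext j
    exact Nat.two_mul_div_two_of_even (hi.2 j)
  · intro x hx
    funext j
    exact Nat.mul_div_cancel_left _ (by norm_num)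
  · intro i hi
    rw [Finset.mem_filter] at hi
    refine Finset.prod_congr rfl fun j _ => ?_
    have hev := hi.2 j
    rw [Lf, if_pos hev, fussCatalan_eq_raney]
  
/-- The recursion satisfied by the limit moments, for `n ≥ 2`. -/
lemma Lf_rec (q M : ℕ) (hq : 1 ≤ q) :
    Lf q (M + 2) = ∑ i ∈ Finset.Nat.antidiagonalTuple (2 * q) M, ∏ j, Lf q (i j) := by
  rcases Nat.even_or_odd M with hM | hM
  · obtain ⟨k, hk⟩ := hM
    have hM2 : M = 2 * k := by omega
    subst hM2
    rw [sum_tuple_Lf_even _ _ _ hq]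
    have heven : Even (2 * k + 2) := by exact ⟨k + 1, by ring⟩
    rw [Lf, if_pos heven, fussCatalan_eq_raney]
    have hdiv : (2 * k + 2) / 2 = k + 1 := by omega
    rw [hdiv]
    have hpas := raney_pascal (2 * q) k 0 (by omega)
    rw [raney_right_zero (2 * q) (k + 1) (by omega)] at hpas
    rw [hpas]
    norm_num
  · rw [sum_tuple_Lf_odd q _ _ (Nat.not_even_iff_odd.mpr hM)]
    have : ¬ Even (M + 2) := by
      intro h
      rw [Nat.even_iff] at h
      have := Nat.odd_iff.mp hM
      omega
    rw [Lf_odd q _ this]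

end Stmt12Aux

open Stmt12Aux

/-- As `t → ∞`, the moments of the reshaped order-`p` free Poisson law (defined from the
cumulants `κ^{(t)}` via the moment–cumulant recursion, with `p = 2q`, `q ≥ 1`) converge
to those of the order-`p` semicircular law: `F_p(n/2)` for even `n` and `0` for odd `n`. -/
theorem stmt12 (q : ℕ) (hq : 1 ≤ q) (m : ℝ → ℕ → ℝ)
    (hm0 : ∀ t : ℝ, 0 < t → m t 0 = 1)
    (hrec : ∀ t : ℝ, 0 < t → ∀ n : ℕ, 1 ≤ n →
      m t n = ∑ s ∈ Finset.Icc 1 n, reshapedCumulant t s *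
        ∑ i ∈ Finset.Nat.antidiagonalTuple (s * q) (n - s), ∏ j, m t (i j)) :
    ∀ n : ℕ, Tendsto (fun t : ℝ => m t n) atTop
      (nhds (if Even n then fussCatalan (2 * q) (n / 2) else 0)) := by
  have main : ∀ n : ℕ, Tendsto (fun t : ℝ => m t n) atTop (nhds (Lf q n)) := by
    intro n
    induction n using Nat.strong_induction_on with
    | _ n ih =>
      rcases n with _ | n
      · -- n = 0
        rw [Lf_zero]
        refine Tendsto.congr' ?_ tendsto_const_nhds
        filter_upwards [eventually_gt_atTop (0 : ℝ)] with t ht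
        exact (hm0 t ht).symm
      · -- n ≥ 1
        set N := n + 1 with hN
        have hn1 : 1 ≤ N := by omega
        -- eventual equality with the recursion
        have hev : (fun t : ℝ => ∑ s ∈ Finset.Icc 1 N, reshapedCumulant t s *
            ∑ i ∈ Finset.Nat.antidiagonalTuple (s * q) (N - s), ∏ j, m t (i j))
              =ᶠ[atTop] fun t => m t N := by
          filter_upwards [eventually_gt_atTop (0 : ℝ)] with t ht
          exact (hrec t ht N hn1).symm
        refine Tendsto.congr' hev ?_
        -- limit of each summand
        have hlim : Tendsto (fun t : ℝ => ∑ s ∈ Finset.Icc 1 N, reshapedCumulant t s *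
            ∑ i ∈ Finset.Nat.antidiagonalTuple (s * q) (N - s), ∏ j, m t (i j)) atTop
            (nhds (∑ s ∈ Finset.Icc 1 N,
              (if s = 2 then ∑ i ∈ Finset.Nat.antidiagonalTuple (2 * q) (N - 2), ∏ j, Lf q (i j)
               else 0))) := by
          refine tendsto_finset_sum _ fun s hs => ?_
          obtain ⟨hs1, hs2⟩ := Finset.mem_Icc.mp hs
          -- inner sum limit
          have hA : Tendsto (fun t : ℝ =>
              ∑ i ∈ Finset.Nat.antidiagonalTuple (s * q) (N - s), ∏ j, m t (i j)) atTop
              (nhds (∑ i ∈ Finset.Nat.antidiagonalTuple (s * q) (N - s), ∏ j, Lf q (i j))) := by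
            refine tendsto_finset_sum _ fun i hi => ?_
            refine tendsto_finset_prod _ fun j _ => ?_
            have hsum := Finset.Nat.mem_antidiagonalTuple.mp hi
            have hij : i j ≤ N - s := by
              rw [← hsum]
              exact Finset.single_le_sum (fun _ _ => Nat.zero_le _) (Finset.mem_univ j)
            exact ih (i j) (by omega)
          rcases Nat.lt_or_ge s 3 with hs3 | hs3
          · interval_cases s
            · -- s = 1
              have hz : (fun t : ℝ => reshapedCumulant t 1 *
                  ∑ i ∈ Finset.Nat.antidiagonalTuple (1 * q) (N - 1), ∏ j, m t (i j))
                    = fun _ => (0 : ℝ) := by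
                funext t
                simp [reshapedCumulant]
              rw [hz]
              simpa using tendsto_const_nhds
            · -- s = 2
              have ho : (fun t : ℝ => reshapedCumulant t 2 *
                  ∑ i ∈ Finset.Nat.antidiagonalTuple (2 * q) (N - 2), ∏ j, m t (i j))
                    = fun t : ℝ =>
                        ∑ i ∈ Finset.Nat.antidiagonalTuple (2 * q) (N - 2), ∏ j, m t (i j) := by
                funext t
                have : reshapedCumulant t 2 = 1 := by
                  rw [reshapedCumulant, if_neg (by norm_num)]
                  norm_num
                rw [this, one_mul]
              rw [ho, if_pos rfl]
              exact hA
          · -- s ≥ 3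
            rw [if_neg (by omega)]
            have hk : Tendsto (fun t : ℝ => reshapedCumulant t s) atTop (nhds 0) := by
              have hy : (0 : ℝ) < (s : ℝ) / 2 - 1 := by
                have : (3 : ℝ) ≤ (s : ℝ) := by exact_mod_cast hs3
                linarith
              have := tendsto_rpow_neg_atTop hy
              refine this.congr' ?_
              filter_upwards with t
              rw [reshapedCumulant, if_neg (by omega)]
              ring_nf
            simpa using hk.mul hA
        have hsum_eq : (∑ s ∈ Finset.Icc 1 N,
            (if s = 2 then ∑ i ∈ Finset.Nat.antidiagonalTuple (2 * q) (N - 2), ∏ j, Lf q (i j)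
             else 0)) = Lf q N := by
          rw [Finset.sum_ite_eq' (Finset.Icc 1 N) 2
            (fun _ => ∑ i ∈ Finset.Nat.antidiagonalTuple (2 * q) (N - 2), ∏ j, Lf q (i j))]
          rcases Nat.lt_or_ge N 2 with hN2 | hN2
          · rw [if_neg (by simp [Finset.mem_Icc]; omega)]
            have : N = 1 := by omega
            rw [this, Lf_one]
          · rw [if_pos (Finset.mem_Icc.mpr ⟨by omega, hN2⟩)]
            obtain ⟨M, hM⟩ : ∃ M, N = M + 2 := ⟨N - 2, by omega⟩
            rw [hM]
            have : M + 2 - 2 = M := by omega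
            rw [this, Lf_rec q M hq]
        rw [← hsum_eq]
        exact hlim
  intro n
  exact main n
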